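/- arXiv:1708.08509 — 2 statements merged into one kernel-verified Lean document; each statement's English description precedes it below -/
import Mathlib

section
/- Let F be a group, let G be a finite non-abelian irreducible F-group, let m be a natural number, and let N be a positive integer. Then the number of N-tuples (y₁,…,y_N) ∈ (G^m)^N with [y₁,…,y_N]_F = G^m equals (|G|^N − 1)^m. -/
/-!
A normal `F`-subgroup `H` of `G^m` meets each factor `G` in a normal `F`-subgroup, hence trivially
or fully. Commutators with elements of the `i`-th factor show that the intersection is the whole
factor as soon as some element of `H` has nontrivial `i`-th coordinate, since `G` has trivial
center. So `[y₁,…,y_N]_F = G^m` exactly when every coordinate `i` has some `y_j` with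
`i`-th coordinate `≠ 1`; transposing, such tuples are `m`-tuples of non-identity elements of
`G^N`, and there are `(|G|^N − 1)^m` of them.
-/

section FGroupDefs

variable (F : Type*) [Group F]

/-- A subgroup of an `F`-group is a *normal `F`-subgroup* if it is normal and
stable under the `F`-action. -/
def IsNormalFSubgroup {G : Type*} [Group G] [MulDistribMulAction F G]
    (H : Subgroup G) : Prop :=
  H.Normal ∧ ∀ (f : F) (x : G), x ∈ H → f • x ∈ H

/-- An *irreducible `F`-group* is a nontrivial `F`-group whose only normal
`F`-subgroups are the trivial subgroup and the whole group. -/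
def IsIrreducibleFGroup (G : Type*) [Group G] [MulDistribMulAction F G] : Prop :=
  Nontrivial G ∧ ∀ H : Subgroup G, IsNormalFSubgroup F H → H = ⊥ ∨ H = ⊤

/-- `[s]_F`: the smallest normal `F`-subgroup containing the set `s`. -/
def normalFClosure {G : Type*} [Group G] [MulDistribMulAction F G] (s : Set G) :
    Subgroup G :=
  sInf {H : Subgroup G | IsNormalFSubgroup F H ∧ s ⊆ H}

/-- A group homomorphism is an `F`-group morphism if it commutes with the `F`-actions. -/
def IsFHom {G G' : Type*} [Group G] [Group G'] [MulDistribMulAction F G]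
    [MulDistribMulAction F G'] (φ : G →* G') : Prop :=
  ∀ (f : F) (x : G), φ (f • x) = f • φ x

/-- `h_F(G)`: the number of `F`-group endomorphisms of `G`. -/
noncomputable def hF (G : Type*) [Group G] [MulDistribMulAction F G] : ℕ :=
  Nat.card {φ : G →* G // IsFHom F φ}

/-- Two `F`-groups are isomorphic if there is a bijective group homomorphism
between them commuting with the `F`-actions. -/
def IsFIso (G G' : Type*) [Group G] [Group G'] [MulDistribMulAction F G]
    [MulDistribMulAction F G'] : Prop :=
  ∃ e : G ≃* G', ∀ (f : F) (x : G), e (f • x) = f • e x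

end FGroupDefs

section NormalFSubgroup

variable {F : Type*} [Group F] {G G' : Type*} [Group G] [Group G']
  [MulDistribMulAction F G] [MulDistribMulAction F G']

lemma subset_normalFClosure (s : Set G) : s ⊆ normalFClosure F s := fun _ hx =>
  Subgroup.mem_sInf.mpr fun _ hH => hH.2 hx

lemma isNormalFSubgroup_normalFClosure (s : Set G) :
    IsNormalFSubgroup F (normalFClosure F s) :=
  ⟨⟨fun _ hn g => Subgroup.mem_sInf.mpr fun H hH =>
      hH.1.1.conj_mem _ (Subgroup.mem_sInf.mp hn H hH) g⟩,
    fun f _ hx => Subgroup.mem_sInf.mpr fun H hH => hH.1.2 f _ (Subgroup.mem_sInf.mp hx H hH)⟩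

lemma normalFClosure_le {s : Set G} {H : Subgroup G} (hH : IsNormalFSubgroup F H)
    (hs : s ⊆ H) : normalFClosure F s ≤ H :=
  sInf_le ⟨hH, hs⟩

lemma isNormalFSubgroup_bot : IsNormalFSubgroup F (⊥ : Subgroup G) :=
  ⟨inferInstance, fun f x hx => by rw [Subgroup.mem_bot] at hx ⊢; rw [hx, smul_one]⟩

lemma IsNormalFSubgroup.comap {H : Subgroup G'} (hH : IsNormalFSubgroup F H) {φ : G →* G'}
    (hφ : IsFHom F φ) : IsNormalFSubgroup F (H.comap φ) :=
  ⟨hH.1.comap φ, fun f x hx => by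
    rw [Subgroup.mem_comap, hφ]
    exact hH.2 f _ hx⟩

lemma isNormalFSubgroup_center : IsNormalFSubgroup F (Subgroup.center G) := by
  refine ⟨inferInstance, fun f x hx => Subgroup.mem_center_iff.mpr fun g => ?_⟩
  rw [← smul_inv_smul f g, ← smul_mul', ← smul_mul', Subgroup.mem_center_iff.mp hx]

lemma IsIrreducibleFGroup.center_eq_bot (hirr : IsIrreducibleFGroup F G)
    (hna : ¬ ∀ a b : G, a * b = b * a) : Subgroup.center G = ⊥ := by
  refine (hirr.2 _ isNormalFSubgroup_center).resolve_right fun htop => hna fun a b => ?_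
  exact (Subgroup.mem_center_iff.mp (htop ▸ Subgroup.mem_top a) b).symm

end NormalFSubgroup

section Pi

open scoped commutatorElement

variable {F : Type*} [Group F] {G : Type*} [Group G] [MulDistribMulAction F G] {ι : Type*}

lemma isFHom_evalMonoidHom (i : ι) : IsFHom F (Pi.evalMonoidHom (fun _ : ι => G) i) :=
  fun _ _ => rfl

lemma isFHom_mulSingle [DecidableEq ι] (i : ι) :
    IsFHom F (MonoidHom.mulSingle (fun _ : ι => G) i) :=
  fun f x => by
    ext k
    rcases eq_or_ne k i with rfl | hk
    · simp
    · simp [Pi.mulSingle_eq_of_ne hk]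

lemma mulSingle_commutatorElement [DecidableEq ι] (i : ι) (g : G) (x : ι → G) :
    ⁅(Pi.mulSingle i g : ι → G), x⁆ = Pi.mulSingle i ⁅g, x i⁆ := by
  ext k
  rcases eq_or_ne k i with rfl | hk
  · simp [commutatorElement_def]
  · simp [commutatorElement_def, Pi.mulSingle_eq_of_ne hk]

/-- `H.comap (Pi.mulSingle i)` is `⊥` or `⊤` by irreducibility, and it is not `⊥`: otherwise
the commutators `⁅Pi.mulSingle i g, x⁆ ∈ H` would make `x i` central. -/
lemma IsNormalFSubgroup.mulSingle_mem [DecidableEq ι] (hirr : IsIrreducibleFGroup F G)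
    (hcen : Subgroup.center G = ⊥) {H : Subgroup (ι → G)} (hH : IsNormalFSubgroup F H)
    {i : ι} {x : ι → G} (hx : x ∈ H) (hxi : x i ≠ 1) (g : G) : Pi.mulSingle i g ∈ H := by
  set K := H.comap (MonoidHom.mulSingle (fun _ : ι => G) i)
  rcases hirr.2 K (hH.comap (isFHom_mulSingle i)) with hbot | htop
  · refine absurd ?_ hxi
    rw [← Subgroup.mem_bot, ← hcen, Subgroup.mem_center_iff]
    intro a
    have hcomm : ⁅a, x i⁆ ∈ K := by
      show Pi.mulSingle i ⁅a, x i⁆ ∈ H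
      rw [← mulSingle_commutatorElement]
      exact H.mul_mem (hH.1.conj_mem _ hx _) (H.inv_mem hx)
    rwa [hbot, Subgroup.mem_bot, commutatorElement_eq_one_iff_mul_comm] at hcomm
  · exact (htop ▸ Subgroup.mem_top g : g ∈ K)

lemma IsNormalFSubgroup.eq_top_iff [Finite ι] (hirr : IsIrreducibleFGroup F G)
    (hcen : Subgroup.center G = ⊥) {H : Subgroup (ι → G)} (hH : IsNormalFSubgroup F H) :
    H = ⊤ ↔ ∀ i, ∃ x ∈ H, x i ≠ 1 := by
  classical
  constructor
  · rintro rfl i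
    obtain ⟨g, hg⟩ := @exists_ne G hirr.1 1
    exact ⟨Pi.mulSingle i g, Subgroup.mem_top _, by simpa using hg⟩
  · intro h
    refine (Subgroup.eq_top_iff' H).mpr fun z => Subgroup.pi_mem_of_mulSingle_mem z fun i => ?_
    obtain ⟨x, hx, hxi⟩ := h i
    exact hH.mulSingle_mem hirr hcen hx hxi (z i)

lemma normalFClosure_range_eq_top_iff [Finite ι] {κ : Type*}
    (hirr : IsIrreducibleFGroup F G) (hcen : Subgroup.center G = ⊥) (y : κ → ι → G) :
    normalFClosure F (Set.range y) = ⊤ ↔ ∀ i, ∃ j, y j i ≠ 1 := by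
  rw [(isNormalFSubgroup_normalFClosure _).eq_top_iff hirr hcen]
  refine forall_congr' fun i => ⟨fun ⟨x, hx, hxi⟩ => ?_, fun ⟨j, hj⟩ =>
    ⟨y j, subset_normalFClosure _ ⟨j, rfl⟩, hj⟩⟩
  by_contra! hy
  have hle : normalFClosure F (Set.range y) ≤ (⊥ : Subgroup G).comap (Pi.evalMonoidHom _ i) :=
    normalFClosure_le (isNormalFSubgroup_bot.comap (isFHom_evalMonoidHom i))
      (Set.range_subset_iff.mpr hy)
  exact hxi (hle hx)

end Pi

lemma card_tuples_forall_exists_ne_one {G κ ι : Type*} [Group G] [Finite G] [Finite κ]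
    [Finite ι] :
    Nat.card {y : κ → ι → G // ∀ i, ∃ j, y j i ≠ 1} =
      (Nat.card G ^ Nat.card κ - 1) ^ Nat.card ι := by
  classical
  have : Fintype G := Fintype.ofFinite G
  have : Fintype κ := Fintype.ofFinite κ
  have hne : Nat.card {w : κ → G // w ≠ 1} = Nat.card G ^ Nat.card κ - 1 := by
    rw [← Nat.card_fun, Nat.card_eq_fintype_card, Nat.card_eq_fintype_card,
      Fintype.card_subtype_compl, Fintype.card_subtype_eq]
  rw [← hne, ← Nat.card_fun]
  exact Nat.card_congr <|
    ((Equiv.piComm _).subtypeEquiv fun y => by simp only [Function.ne_iff]; rfl).trans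
      (Equiv.subtypePiEquivPi (p := fun _ w => w ≠ 1))

theorem count_tuples_nonabelian_general
    {F G : Type*} [Group F] [Group G] [MulDistribMulAction F G] [Finite G]
    (hirr : IsIrreducibleFGroup F G)
    (hna : ¬ ∀ a b : G, a * b = b * a)
    (m : ℕ) (N : ℕ) :
    (Nat.card {y : Fin N → (Fin m → G) //
        normalFClosure F (Set.range y) = ⊤} : ℤ) =
      ((Nat.card G : ℤ) ^ N - 1) ^ m := by
  have hcard := card_tuples_forall_exists_ne_one (G := G) (κ := Fin N) (ι := Fin m)
  rw [Nat.card_congr (Equiv.subtypeEquivRight fun y =>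
    normalFClosure_range_eq_top_iff hirr (hirr.center_eq_bot hna) y), hcard]
  simp only [Nat.card_eq_fintype_card, Fintype.card_fin]
  push_cast [Nat.cast_sub (Nat.one_le_pow _ _ Nat.card_pos)]
  ring

/-- for a finite non-abelian irreducible `F`-group `G`, the number of
`N`-tuples in `G^m` generating `G^m` as a normal `F`-subgroup is `(|G|^N − 1)^m`. -/
theorem count_tuples_nonabelian
    {F G : Type*} [Group F] [Group G] [MulDistribMulAction F G] [Finite G]
    (hirr : IsIrreducibleFGroup F G)
    (hna : ¬ ∀ a b : G, a * b = b * a)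
    (m : ℕ) (N : ℕ) (hN : 0 < N) :
    (Nat.card {y : Fin N → (Fin m → G) //
        normalFClosure F (Set.range y) = ⊤} : ℤ) =
      ((Nat.card G : ℤ) ^ N - 1) ^ m :=
  count_tuples_nonabelian_general hirr hna m N
end

section
/- Let F be a group, let G₁,…,G_k be finite irreducible F-groups such that G_i and G_j are not isomorphic as F-groups for i ≠ j, let m₁,…,m_k be non-negative integers, and fix an index j. The map sending a surjective F-group morphism ∏_{i=1}^k G_i^{m_i} → G_j to its restriction to the block G_j^{m_j} (embedded in the product with identity entries in all other blocks) is injective, and its image is exactly the set of surjective F-group morphisms from G_j^{m_j} to G_j; in particular it gives a bijection between the surjective F-group morphisms ∏_{i=1}^k G_i^{m_i} → G_j and the surjective F-group morphisms G_j^{m_j} → G_j. -/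
/-!
A surjective `F`-morphism `φ : ∏ᵢ Gᵢ^{mᵢ} → G_j` restricted to a single coordinate copy of
`Gᵢ` is an `F`-morphism `Gᵢ → G_j` whose image is normal, being the image of a normal
subgroup under a surjection. By irreducibility of source and target (a Schur-type argument)
such a morphism is trivial or an isomorphism, so for `i ≠ j` it is trivial. Hence `φ` factors
through the projection onto the block `G_j^{m_j}`, which makes restriction to that block
inverse to composition with the projection.
-/

open Function

section FGroup

variable {F : Type*} [Group F]

theorem IsFHom.comp {A B C : Type*} [Group A] [Group B] [Group C] [MulDistribMulAction F A]
    [MulDistribMulAction F B] [MulDistribMulAction F C] {ψ : B →* C} {φ : A →* B}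
    (hψ : IsFHom F ψ) (hφ : IsFHom F φ) : IsFHom F (ψ.comp φ) := fun f x => by
  rw [MonoidHom.comp_apply, hφ, hψ, MonoidHom.comp_apply]

theorem isFHom_mulSingle_s17 {ι : Type*} [DecidableEq ι] (H : ι → Type*) [∀ i, Group (H i)]
    [∀ i, MulDistribMulAction F (H i)] (i : ι) : IsFHom F (MonoidHom.mulSingle H i) :=
  fun f a => funext fun l => (Pi.apply_mulSingle (fun _ y => f • y) (fun _ => smul_one f) i a l).symm

theorem isFHom_evalMonoidHom_s17 {ι : Type*} (H : ι → Type*) [∀ i, Group (H i)]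
    [∀ i, MulDistribMulAction F (H i)] (i : ι) : IsFHom F (Pi.evalMonoidHom H i) :=
  fun _ _ => rfl

section Irreducible

variable {A B : Type*} [Group A] [Group B] [MulDistribMulAction F A] [MulDistribMulAction F B]
  {φ : A →* B}

theorem IsFHom.isNormalFSubgroup_range (hφ : IsFHom F φ) (hn : φ.range.Normal) :
    IsNormalFSubgroup F φ.range := by
  refine ⟨hn, ?_⟩
  rintro f _ ⟨a, rfl⟩
  exact ⟨f • a, hφ f a⟩

theorem IsFHom.isNormalFSubgroup_ker (hφ : IsFHom F φ) : IsNormalFSubgroup F φ.ker := by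
  refine ⟨φ.normal_ker, fun f a ha => ?_⟩
  rw [MonoidHom.mem_ker] at ha ⊢
  rw [hφ, ha, smul_one]

/-- Schur's lemma for irreducible `F`-groups, for morphisms with normal image. -/
theorem IsFHom.eq_one_of_not_isFIso (hA : IsIrreducibleFGroup F A) (hB : IsIrreducibleFGroup F B)
    (hAB : ¬ IsFIso F A B) (hφ : IsFHom F φ) (hn : φ.range.Normal) : φ = 1 := by
  rcases hB.2 _ (hφ.isNormalFSubgroup_range hn) with hbot | htop
  · exact MonoidHom.range_eq_bot_iff.mp hbot
  have hsurj : Surjective φ := MonoidHom.range_eq_top.mp htop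
  rcases hA.2 _ hφ.isNormalFSubgroup_ker with hker | hker
  · exact (hAB ⟨MulEquiv.ofBijective φ ⟨(MonoidHom.ker_eq_bot_iff φ).mp hker, hsurj⟩, hφ⟩).elim
  · have hφ1 : φ = 1 := MonoidHom.ker_eq_top_iff.mp hker
    rw [hφ1, MonoidHom.range_one] at htop
    have := hB.1
    exact (bot_ne_top htop).elim

end Irreducible

end FGroup

section Pi

variable {ι : Type*} [DecidableEq ι] {H : ι → Type*} [∀ i, Group (H i)]

theorem MonoidHom.normal_range_mulSingle_comp {A : Type*} [Group A] {i : ι} {f : A →* H i}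
    (hf : f.range.Normal) : ((MonoidHom.mulSingle H i).comp f).range.Normal := by
  refine ⟨?_⟩
  rintro _ ⟨a, rfl⟩ x
  obtain ⟨b, hb⟩ := hf.conj_mem (f a) ⟨a, rfl⟩ (x i)
  refine ⟨b, funext fun l => ?_⟩
  rw [comp_apply, hb]
  exact (Pi.apply_mulSingle (fun l y => x l * y * (x l)⁻¹) (fun _ => by group) i (f a) l).symm

theorem MonoidHom.normal_range_mulSingle (i : ι) : (MonoidHom.mulSingle H i).range.Normal := by
  have hid : (MonoidHom.id (H i)).range.Normal := by
    rw [MonoidHom.range_eq_top.mpr surjective_id]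
    exact Subgroup.normal_top
  simpa using normal_range_mulSingle_comp hid

theorem MonoidHom.eq_comp_evalMonoidHom_of_comp_mulSingle_eq_one [Finite ι] {K : Type*}
    [Group K] (φ : (∀ i, H i) →* K) (j : ι) (h : ∀ i, i ≠ j → φ.comp (mulSingle H i) = 1) :
    φ = (φ.comp (mulSingle H j)).comp (Pi.evalMonoidHom H j) := by
  refine MonoidHom.pi_ext fun i x => ?_
  rcases eq_or_ne i j with rfl | hij
  · simp
  · simpa [Pi.mulSingle_eq_of_ne hij.symm] using DFunLike.congr_fun (h i hij) x

end Pi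

section Blocks

variable {F : Type*} [Group F] {ι : Type*} [DecidableEq ι] {κ : ι → Type*} [∀ i, Finite (κ i)]
  [∀ i, DecidableEq (κ i)] {G : ι → Type*} [∀ i, Group (G i)] [∀ i, MulDistribMulAction F (G i)]
  {K : Type*} [Group K] [MulDistribMulAction F K]

theorem IsFHom.comp_mulSingle_eq_one_of_not_isFIso {φ : (∀ i, κ i → G i) →* K}
    (hφ : IsFHom F φ) (hs : Surjective φ) {i : ι} (hi : IsIrreducibleFGroup F (G i))
    (hK : IsIrreducibleFGroup F K) (hiK : ¬ IsFIso F (G i) K) :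
    φ.comp (MonoidHom.mulSingle (fun i => κ i → G i) i) = 1 := by
  refine MonoidHom.pi_ext fun l y => ?_
  suffices h : (φ.comp (MonoidHom.mulSingle _ i)).comp
      (MonoidHom.mulSingle (fun _ : κ i => G i) l) = 1 from DFunLike.congr_fun h y
  refine IsFHom.eq_one_of_not_isFIso hi hK hiK
    ((hφ.comp (isFHom_mulSingle_s17 _ i)).comp (isFHom_mulSingle_s17 _ l)) ?_
  rw [MonoidHom.comp_assoc, MonoidHom.range_comp]
  exact (MonoidHom.normal_range_mulSingle_comp (MonoidHom.normal_range_mulSingle l)).map φ hs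

end Blocks

theorem restriction_to_block_bijective_general
    {F : Type*} [Group F] {k : ℕ} (G : Fin k → Type*)
    [∀ i, Group (G i)] [∀ i, MulDistribMulAction F (G i)]
    (hirr : ∀ i, IsIrreducibleFGroup F (G i))
    (hnoniso : ∀ i j, i ≠ j → ¬ IsFIso F (G i) (G j))
    (m : Fin k → ℕ) (j : Fin k) :
    Function.Injective
      (fun φ : {φ : (∀ i, Fin (m i) → G i) →* G j //
          IsFHom F φ ∧ Function.Surjective φ} =>
        φ.1.comp (MonoidHom.mulSingle (fun i => Fin (m i) → G i) j)) ∧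
    Set.range
      (fun φ : {φ : (∀ i, Fin (m i) → G i) →* G j //
          IsFHom F φ ∧ Function.Surjective φ} =>
        φ.1.comp (MonoidHom.mulSingle (fun i => Fin (m i) → G i) j)) =
      {ψ : (Fin (m j) → G j) →* G j | IsFHom F ψ ∧ Function.Surjective ψ} := by
  have factor (φ : {φ : (∀ i, Fin (m i) → G i) →* G j // IsFHom F φ ∧ Surjective φ}) :
      φ.1 = (φ.1.comp (MonoidHom.mulSingle _ j)).comp (Pi.evalMonoidHom _ j) :=
    φ.1.eq_comp_evalMonoidHom_of_comp_mulSingle_eq_one j fun i hij =>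
      φ.2.1.comp_mulSingle_eq_one_of_not_isFIso φ.2.2 (hirr i) (hirr j) (hnoniso i j hij)
  refine ⟨fun φ₁ φ₂ h => Subtype.ext ?_, Set.ext fun ψ => ⟨?_, ?_⟩⟩
  · rw [factor φ₁, factor φ₂]
    exact congrArg (·.comp (Pi.evalMonoidHom (fun i => Fin (m i) → G i) j)) h
  · rintro ⟨φ, rfl⟩
    refine ⟨φ.2.1.comp (isFHom_mulSingle_s17 _ j), ?_⟩
    have hs := φ.2.2
    rw [factor φ, MonoidHom.coe_comp] at hs
    exact hs.of_comp
  · rintro ⟨hψ, hs⟩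
    refine ⟨⟨ψ.comp (Pi.evalMonoidHom _ j), hψ.comp (isFHom_evalMonoidHom_s17 _ j),
      hs.comp (surjective_eval j)⟩, ?_⟩
    ext y
    simp

/-- restriction to the `j`-th block is a bijection from surjective
`F`-group morphisms `∏ᵢ Gᵢ^{mᵢ} → G_j` to surjective `F`-group morphisms
`G_j^{m_j} → G_j`. -/
theorem restriction_to_block_bijective
    {F : Type*} [Group F] {k : ℕ} (G : Fin k → Type*)
    [∀ i, Group (G i)] [∀ i, MulDistribMulAction F (G i)] [∀ i, Finite (G i)]
    (hirr : ∀ i, IsIrreducibleFGroup F (G i))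
    (hnoniso : ∀ i j, i ≠ j → ¬ IsFIso F (G i) (G j))
    (m : Fin k → ℕ) (j : Fin k) :
    Function.Injective
      (fun φ : {φ : (∀ i, Fin (m i) → G i) →* G j //
          IsFHom F φ ∧ Function.Surjective φ} =>
        φ.1.comp (MonoidHom.mulSingle (fun i => Fin (m i) → G i) j)) ∧
    Set.range
      (fun φ : {φ : (∀ i, Fin (m i) → G i) →* G j //
          IsFHom F φ ∧ Function.Surjective φ} =>
        φ.1.comp (MonoidHom.mulSingle (fun i => Fin (m i) → G i) j)) =
      {ψ : (Fin (m j) → G j) →* G j | IsFHom F ψ ∧ Function.Surjective ψ} :=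
  restriction_to_block_bijective_general G hirr hnoniso m j
end
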